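/- Let 1 ≤ p < ∞, σ a locally finite Borel measure on ℝⁿ, and 𝓕 a σ-sparse collection of dyadic cubes. For each F ∈ 𝓕 let a_F be a nonnegative measurable function supported on F and constant on each cube F' ∈ ch_𝓕(F) (the maximal cubes of 𝓕 strictly contained in F). Then (∑_{F ∈ 𝓕} ‖a_F‖_{L^p(σ)}^p)^{1/p} ≤ ‖∑_{F ∈ 𝓕} a_F‖_{L^p(σ)} ≤ 3p (∑_{F ∈ 𝓕} ‖a_F‖_{L^p(σ)}^p)^{1/p}. -/

import Mathlib

/-!
The lower bound is the superadditivity of `t ↦ t ^ p`.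

For the upper bound split `a_F = h_F + g_F`, where `h_F` is the restriction of `a_F` to the union
of the children of `F`. The `g_F` live on the pairwise disjoint sets `F \ ⋃ ch(F)`, so
`‖∑ g_F‖_p ^ p ≤ ∑ ‖a_F‖_p ^ p`. For `h = ∑ h_F`, the cubes of `𝓕` containing a point are nested,
and telescoping along this chain gives `h ^ p ≤ p ∑_G h_G (∑_{G' ⊇ G} h_{G'}) ^ (p - 1)`. The
`G`-th term is constant on every child `M` of `G` and `σ M ≤ 2 σ (E M)`, so its integral is at most
twice its integral over `Y_G = ⋃_{M ∈ ch(G)} E M`, where it is dominated by `a_G h ^ (p - 1)`.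
Every cube has at most one parent, so the `Y_G` are pairwise disjoint, and Hölder's inequality
gives `‖h‖_p ^ p ≤ 2p (∑ ‖a_F‖_p ^ p) ^ (1/p) ‖h‖_p ^ (p - 1)`. Dividing by `‖h‖_p ^ (p - 1)`
needs `‖h‖_p < ∞`, which holds for finite subfamilies; monotone convergence then removes the
truncation.
-/

open MeasureTheory ENNReal

noncomputable section

def DyadicCube (n : ℕ) (k : ℤ) (j : Fin n → ℤ) : Set (Fin n → ℝ) :=
  {x | ∀ i, (j i : ℝ) / 2 ^ k ≤ x i ∧ x i < ((j i : ℝ) + 1) / 2 ^ k}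

def IsDyadicCube {n : ℕ} (Q : Set (Fin n → ℝ)) : Prop :=
  ∃ k j, Q = DyadicCube n k j

/-- `F'` is a child of `F` in the family `𝓕`: a maximal cube of `𝓕` strictly contained in `F`. -/
def IsChild {n : ℕ} (𝓕 : Set (Set (Fin n → ℝ))) (F F' : Set (Fin n → ℝ)) : Prop :=
  F' ∈ 𝓕 ∧ F' ⊂ F ∧ ∀ F'' ∈ 𝓕, F' ⊆ F'' → F'' ⊂ F → F'' = F'

open Set Function

theorem Real.add_rpow_le_rpow_add_mul {p : ℝ} (hp : 1 ≤ p) {a b : ℝ} (ha : 0 ≤ a) (hb : 0 ≤ b) :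
    (a + b) ^ p ≤ a ^ p + p * (b * (a + b) ^ (p - 1)) := by
  rcases (add_nonneg ha hb).eq_or_lt with hab | hab
  · obtain ⟨rfl, rfl⟩ : a = 0 ∧ b = 0 := ⟨by linarith, by linarith⟩
    simp [Real.zero_rpow (by linarith : p ≠ 0)]
  -- Bernoulli's inequality for `1 - b / (a + b) = a / (a + b)`, multiplied by `(a + b) ^ p`.
  have bernoulli := one_add_mul_self_le_rpow_one_add (s := -(b / (a + b)))
    (by rw [neg_le_neg_iff, div_le_one hab]; linarith) hp
  rw [show 1 + -(b / (a + b)) = a / (a + b) by field_simp; ring,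
    Real.div_rpow ha hab.le, le_div_iff₀ (Real.rpow_pos_of_pos hab p)] at bernoulli
  have hpow : (a + b) ^ p = (a + b) * (a + b) ^ (p - 1) := by
    rw [← Real.rpow_one_add' hab.le (by linarith)]; ring_nf
  rw [hpow] at bernoulli ⊢
  field_simp at bernoulli
  linear_combination bernoulli

theorem ENNReal.add_rpow_le_rpow_add_mul {p : ℝ} (hp : 1 ≤ p) (a b : ℝ≥0∞) :
    (a + b) ^ p ≤ a ^ p + ENNReal.ofReal p * (b * (a + b) ^ (p - 1)) := by
  have hp0 : 0 < p := by linarith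
  rcases eq_or_ne a ⊤ with rfl | ha
  · simp [top_rpow_of_pos hp0]
  rcases eq_or_ne b ⊤ with rfl | hb
  · have : (⊤ : ℝ≥0∞) ^ (p - 1) ≠ 0 := by simp [rpow_eq_zero_iff]; linarith
    simp [top_mul this, mul_top, hp0]
  rw [← ofReal_toReal ha, ← ofReal_toReal hb, ← ofReal_add toReal_nonneg toReal_nonneg,
    ofReal_rpow_of_nonneg (by positivity) hp0.le, ofReal_rpow_of_nonneg (by positivity) hp0.le,
    ofReal_rpow_of_nonneg (by positivity) (by linarith), ← ofReal_mul toReal_nonneg,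
    ← ofReal_mul hp0.le, ← ofReal_add (by positivity) (by positivity)]
  exact ofReal_le_ofReal (Real.add_rpow_le_rpow_add_mul hp toReal_nonneg toReal_nonneg)

theorem ENNReal.rpow_sum_le_of_isChain {ι : Type*} [Preorder ι] [DecidableLE ι] {s : Finset ι}
    (hs : IsChain (· ≤ ·) (s : Set ι)) (c : ι → ℝ≥0∞) {p : ℝ} (hp : 1 ≤ p) :
    (∑ i ∈ s, c i) ^ p ≤
      ENNReal.ofReal p * ∑ i ∈ s, c i * (∑ j ∈ s with i ≤ j, c j) ^ (p - 1) := by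
  classical
  induction s using Finset.strongInduction with | H s ih =>
  rcases s.eq_empty_or_nonempty with rfl | hne
  · simp [zero_rpow_of_pos (by linarith : 0 < p)]
  obtain ⟨m, hm⟩ := s.exists_minimal hne
  have hm_le : ∀ j ∈ s, m ≤ j := fun j hj =>
    (hs.total hm.prop hj).elim id (hm.le_of_le hj)
  have hsum : ∑ j ∈ s with m ≤ j, c j = ∑ i ∈ s.erase m, c i + c m := by
    rw [Finset.filter_true_of_mem hm_le, Finset.sum_erase_add _ _ hm.prop]
  have ih' := ih _ (Finset.erase_ssubset hm.prop) (hs.mono (by simp))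
  calc (∑ i ∈ s, c i) ^ p = (∑ i ∈ s.erase m, c i + c m) ^ p := by
        rw [Finset.sum_erase_add _ _ hm.prop]
    _ ≤ (∑ i ∈ s.erase m, c i) ^ p
          + ENNReal.ofReal p * (c m * (∑ j ∈ s with m ≤ j, c j) ^ (p - 1)) := by
        rw [hsum]; exact add_rpow_le_rpow_add_mul hp _ _
    _ ≤ ENNReal.ofReal p * ∑ i ∈ s.erase m, c i * (∑ j ∈ s with i ≤ j, c j) ^ (p - 1)
          + ENNReal.ofReal p * (c m * (∑ j ∈ s with m ≤ j, c j) ^ (p - 1)) := by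
        refine add_le_add_left (ih'.trans ?_) _
        gcongr
        exact Finset.erase_subset m s
    _ = ENNReal.ofReal p * ∑ i ∈ s, c i * (∑ j ∈ s with i ≤ j, c j) ^ (p - 1) := by
        rw [← mul_add, Finset.sum_erase_add _ _ hm.prop]

theorem ENNReal.tsum_rpow_le_rpow_tsum {ι : Type*} {p : ℝ} (hp : 1 ≤ p) (c : ι → ℝ≥0∞) :
    ∑' i, c i ^ p ≤ (∑' i, c i) ^ p := by
  have hsplit : ∀ x : ℝ≥0∞, x ^ p = x * x ^ (p - 1) := fun x => by
    simpa using rpow_add_of_nonneg (x := x) 1 (p - 1) zero_le_one (by linarith)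
  calc ∑' i, c i ^ p = ∑' i, c i * c i ^ (p - 1) := by simp_rw [← hsplit]
    _ ≤ ∑' i, c i * (∑' j, c j) ^ (p - 1) := by
        gcongr with i
        exact ENNReal.le_tsum i
    _ = (∑' i, c i) ^ p := by rw [ENNReal.tsum_mul_right, ← hsplit]

theorem ENNReal.rpow_one_div_le_of_le_mul_rpow {p q : ℝ} (hpq : p.HolderConjugate q)
    {I C : ℝ≥0∞} (hI : I ≠ ⊤) (h : I ≤ C * I ^ (1 / q)) : I ^ (1 / p) ≤ C := by
  rcases eq_or_ne I 0 with rfl | hI0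
  · exact (zero_rpow_of_pos (one_div_pos.2 hpq.pos)).trans_le zero_le
  have hq : 0 < 1 / q := one_div_pos.2 hpq.symm.pos
  rw [← ENNReal.mul_le_mul_iff_left (a := I ^ (1 / p)) (rpow_pos (pos_iff_ne_zero.2 hI0) hI).ne'
    (rpow_ne_top_of_nonneg hq.le hI), ← rpow_add _ _ hI0 hI, one_div, one_div,
    hpq.inv_add_inv_eq_one, rpow_one, ← one_div]
  exact h

theorem ENNReal.tsum_indicator_rpow_of_pairwise_disjoint {α ι : Type*} {S : ι → Set α}
    (hd : Pairwise (Disjoint on S)) (f : ι → α → ℝ≥0∞) {p : ℝ} (hp : 0 < p) (x : α) :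
    (∑' i, (S i).indicator (f i) x) ^ p = ∑' i, (S i).indicator (fun y => f i y ^ p) x := by
  by_cases hx : ∃ i, x ∈ S i
  · obtain ⟨i, hi⟩ := hx
    have hj : ∀ j ≠ i, x ∉ S j := fun j hji hj => Set.disjoint_left.1 (hd hji) hj hi
    rw [tsum_eq_single i fun j hji => indicator_of_notMem (hj j hji) _,
      tsum_eq_single i fun j hji => indicator_of_notMem (hj j hji) _,
      indicator_of_mem hi, indicator_of_mem hi]
  · simp only [not_exists] at hx
    simp [indicator_of_notMem (hx _), zero_rpow_of_pos hp]

section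

variable {α ι : Type*} [MeasurableSpace α] {μ : Measure α}

theorem lintegral_tsum_indicator_rpow_le [Countable ι] {S : ι → Set α}
    (hS : ∀ i, MeasurableSet (S i)) (hd : Pairwise (Disjoint on S)) {f : ι → α → ℝ≥0∞}
    (hf : ∀ i, Measurable (f i)) {p : ℝ} (hp : 0 < p) :
    ∫⁻ x, (∑' i, (S i).indicator (f i) x) ^ p ∂μ ≤ ∑' i, ∫⁻ x, f i x ^ p ∂μ := by
  simp_rw [tsum_indicator_rpow_of_pairwise_disjoint hd f hp]
  rw [lintegral_tsum fun i => (((hf i).pow_const p).indicator (hS i)).aemeasurable]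
  gcongr with i x
  exact indicator_le_self _ _ x

theorem tsum_lintegral_rpow_le_lintegral_rpow_tsum [Countable ι] {f : ι → α → ℝ≥0∞}
    (hf : ∀ i, Measurable (f i)) {p : ℝ} (hp : 1 ≤ p) :
    ∑' i, ∫⁻ x, f i x ^ p ∂μ ≤ ∫⁻ x, (∑' i, f i x) ^ p ∂μ := by
  rw [← lintegral_tsum fun i => ((hf i).pow_const p).aemeasurable]
  exact lintegral_mono fun x => tsum_rpow_le_rpow_tsum hp _

theorem lintegral_le_mul_setLIntegral_iUnion [Countable ι] {M E : ι → Set α}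
    (hM : ∀ i, MeasurableSet (M i)) (hMd : Pairwise (Disjoint on M))
    (hE : ∀ i, MeasurableSet (E i)) (hEM : ∀ i, E i ⊆ M i) {c : ℝ≥0∞}
    (hμ : ∀ i, μ (M i) ≤ c * μ (E i)) {φ : α → ℝ≥0∞} (hφ : ∀ x ∉ ⋃ i, M i, φ x = 0)
    (hφM : ∀ i, ∀ x ∈ M i, ∀ y ∈ M i, φ x = φ y) :
    ∫⁻ x, φ x ∂μ ≤ c * ∫⁻ x in ⋃ i, E i, φ x ∂μ := by
  have hEd : Pairwise (Disjoint on E) := fun i j hij => (hMd hij).mono (hEM i) (hEM j)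
  have hpiece : ∀ i, ∫⁻ x in M i, φ x ∂μ ≤ c * ∫⁻ x in E i, φ x ∂μ := by
    intro i
    rcases (M i).eq_empty_or_nonempty with h | ⟨x₀, hx₀⟩
    · simp [h]
    rw [setLIntegral_congr_fun (hM i) fun x hx => hφM i x hx x₀ hx₀,
      setLIntegral_congr_fun (hE i) fun x hx => hφM i x (hEM i hx) x₀ hx₀,
      setLIntegral_const, setLIntegral_const, mul_left_comm]
    gcongr
    exact hμ i
  calc ∫⁻ x, φ x ∂μ = ∑' i, ∫⁻ x in M i, φ x ∂μ := by
        rw [← lintegral_iUnion hM hMd, setLIntegral_eq_of_support_subset]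
        exact fun x hx => by_contra fun h => hx (hφ x h)
    _ ≤ ∑' i, c * ∫⁻ x in E i, φ x ∂μ := ENNReal.tsum_le_tsum hpiece
    _ = c * ∫⁻ x in ⋃ i, E i, φ x ∂μ := by rw [ENNReal.tsum_mul_left, lintegral_iUnion hE hEd]

theorem lintegral_rpow_sum_ne_top (s : Finset ι) {f : ι → α → ℝ≥0∞}
    (hf : ∀ i, Measurable (f i)) {p : ℝ} (hp : 1 ≤ p) (h : ∀ i ∈ s, ∫⁻ x, f i x ^ p ∂μ ≠ ⊤) :
    ∫⁻ x, (∑ i ∈ s, f i x) ^ p ∂μ ≠ ⊤ := by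
  have hcard : (s.card : ℝ≥0∞) ^ (p - 1) ≠ ⊤ :=
    rpow_ne_top_of_nonneg (by linarith) (natCast_ne_top _)
  refine ne_top_of_le_ne_top ?_
    (lintegral_mono fun x => rpow_sum_le_const_mul_sum_rpow s (f · x) hp)
  rw [lintegral_const_mul' _ _ hcard, lintegral_finsetSum _ fun i _ => (hf i).pow_const p]
  exact mul_ne_top hcard (sum_ne_top.2 h)

theorem lintegral_rpow_tsum_le_of_forall_finset [Countable ι] {f : ι → α → ℝ≥0∞}
    (hf : ∀ i, Measurable (f i)) {p : ℝ} (hp : 0 < p) {C : ℝ≥0∞}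
    (h : ∀ s : Finset ι, ∫⁻ x, (∑ i ∈ s, f i x) ^ p ∂μ ≤ C) :
    ∫⁻ x, (∑' i, f i x) ^ p ∂μ ≤ C := by
  classical
  have hsup : ∀ x, (∑' i, f i x) ^ p = ⨆ s : Finset ι, (∑ i ∈ s, f i x) ^ p := fun x => by
    rw [ENNReal.tsum_eq_iSup_sum]
    exact (monotone_rpow_of_nonneg hp.le).map_iSup_of_continuousAt
      continuous_rpow_const.continuousAt (zero_rpow_of_pos hp)
  have hdir : Directed (· ≤ ·) fun (s : Finset ι) x => (∑ i ∈ s, f i x) ^ p := fun s t =>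
    ⟨s ∪ t, fun _ => rpow_le_rpow (Finset.sum_le_sum_of_subset Finset.subset_union_left) hp.le,
      fun _ => rpow_le_rpow (Finset.sum_le_sum_of_subset Finset.subset_union_right) hp.le⟩
  rw [lintegral_congr hsup, lintegral_iSup_directed (fun s => by fun_prop) hdir]
  exact iSup_le h

end

section Dyadic

variable {n : ℕ}

theorem mem_dyadicCube_iff {k : ℤ} {j : Fin n → ℤ} {x : Fin n → ℝ} :
    x ∈ DyadicCube n k j ↔ ∀ i, ⌊x i * 2 ^ k⌋ = j i := by
  have h2k : (0 : ℝ) < 2 ^ k := zpow_pos two_pos k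
  simp only [DyadicCube, mem_ofPred_eq, Int.floor_eq_iff, div_le_iff₀ h2k, lt_div_iff₀ h2k]

theorem Int.floor_mul_two_zpow_eq_of_le {k k' : ℤ} (hk : k ≤ k') {s t : ℝ}
    (h : ⌊s * 2 ^ k'⌋ = ⌊t * 2 ^ k'⌋) : ⌊s * 2 ^ k⌋ = ⌊t * 2 ^ k⌋ := by
  obtain ⟨m, rfl⟩ := Int.le.dest hk
  have hdiv : ∀ u : ℝ, u * 2 ^ k = u * 2 ^ (k + m) / ((2 ^ m : ℕ) : ℝ) := fun u => by
    rw [zpow_add₀ two_ne_zero, zpow_natCast]; push_cast; field_simp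
  rw [hdiv s, hdiv t, Int.floor_div_natCast, Int.floor_div_natCast, h]

theorem dyadicCube_subset_of_le {k k' : ℤ} (hk : k ≤ k') {j j' : Fin n → ℤ} {x : Fin n → ℝ}
    (hx : x ∈ DyadicCube n k j) (hx' : x ∈ DyadicCube n k' j') :
    DyadicCube n k' j' ⊆ DyadicCube n k j := by
  intro y hy
  rw [mem_dyadicCube_iff] at hx hx' hy ⊢
  exact fun i => (Int.floor_mul_two_zpow_eq_of_le hk ((hy i).trans (hx' i).symm)).trans (hx i)

theorem dyadicCube_nonempty (k : ℤ) (j : Fin n → ℤ) : (DyadicCube n k j).Nonempty :=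
  ⟨fun i => (j i : ℝ) / 2 ^ k, fun _ =>
    ⟨le_rfl, div_lt_div_of_pos_right (lt_add_one _) (zpow_pos two_pos k)⟩⟩

theorem lt_of_dyadicCube_ssubset {k k' : ℤ} {j j' : Fin n → ℤ}
    (h : DyadicCube n k' j' ⊂ DyadicCube n k j) : k < k' := by
  by_contra! hk
  obtain ⟨x, hx⟩ := dyadicCube_nonempty k' j'
  exact h.not_subset (dyadicCube_subset_of_le hk hx (h.subset hx))

theorem countable_setOf_isDyadicCube : {Q : Set (Fin n → ℝ) | IsDyadicCube Q}.Countable :=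
  (countable_range fun kj : ℤ × (Fin n → ℤ) => DyadicCube n kj.1 kj.2).mono <| by
    rintro _ ⟨k, j, rfl⟩
    exact ⟨(k, j), rfl⟩

namespace IsDyadicCube

variable {Q Q' : Set (Fin n → ℝ)}

theorem nonempty (hQ : IsDyadicCube Q) : Q.Nonempty := by
  obtain ⟨k, j, rfl⟩ := hQ
  exact dyadicCube_nonempty k j

theorem measurableSet (hQ : IsDyadicCube Q) : MeasurableSet Q := by
  obtain ⟨k, j, rfl⟩ := hQ
  have : DyadicCube n k j = univ.pi fun i => Ico ((j i : ℝ) / 2 ^ k) (((j i : ℝ) + 1) / 2 ^ k) := by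
    ext x; simp [DyadicCube]
  rw [this]
  exact MeasurableSet.univ_pi fun _ => measurableSet_Ico

theorem eq_dyadicCube_floor (hQ : IsDyadicCube Q) {x : Fin n → ℝ} (hx : x ∈ Q) :
    ∃ k, Q = DyadicCube n k fun i => ⌊x i * 2 ^ k⌋ := by
  obtain ⟨k, j, rfl⟩ := hQ
  exact ⟨k, congrArg _ (funext fun i => (mem_dyadicCube_iff.1 hx i).symm)⟩

theorem subset_or_subset (hQ : IsDyadicCube Q) (hQ' : IsDyadicCube Q')
    (h : (Q ∩ Q').Nonempty) : Q ⊆ Q' ∨ Q' ⊆ Q := by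
  obtain ⟨k, j, rfl⟩ := hQ
  obtain ⟨k', j', rfl⟩ := hQ'
  obtain ⟨x, hx, hx'⟩ := h
  rcases le_total k k' with hk | hk
  · exact Or.inr (dyadicCube_subset_of_le hk hx hx')
  · exact Or.inl (dyadicCube_subset_of_le hk hx' hx)

theorem ssubset_or_ssubset (hQ : IsDyadicCube Q) (hQ' : IsDyadicCube Q') {x : Fin n → ℝ}
    (hx : x ∈ Q) (hx' : x ∈ Q') (hne : Q ≠ Q') : Q ⊂ Q' ∨ Q' ⊂ Q :=
  (hQ.subset_or_subset hQ' ⟨x, hx, hx'⟩).imp (ssubset_of_subset_of_ne · hne)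
    (ssubset_of_subset_of_ne · hne.symm)

end IsDyadicCube

end Dyadic

section DyadicFamily

variable {n : ℕ} {𝓕 : Set (Set (Fin n → ℝ))}

theorem exists_isChild_superset (h𝓕 : ∀ F ∈ 𝓕, IsDyadicCube F) {F G : Set (Fin n → ℝ)}
    (hF : F ∈ 𝓕) (hG : G ∈ 𝓕) (hGF : G ⊂ F) : ∃ M, IsChild 𝓕 F M ∧ G ⊆ M := by
  classical
  obtain ⟨x, hx⟩ := (h𝓕 G hG).nonempty
  set C : ℤ → Set (Fin n → ℝ) := fun k => DyadicCube n k fun i => ⌊x i * 2 ^ k⌋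
  have hxC : ∀ k, x ∈ C k := fun k => mem_dyadicCube_iff.2 fun _ => rfl
  obtain ⟨kF, hkF⟩ : ∃ k, F = C k := (h𝓕 F hF).eq_dyadicCube_floor (hGF.subset hx)
  obtain ⟨kG, hkG⟩ : ∃ k, G = C k := (h𝓕 G hG).eq_dyadicCube_floor hx
  -- The child is the cube of `𝓕` through `x` between `G` and `F` of the coarsest scale.
  obtain ⟨k₀, ⟨hk₀, hGk₀, hk₀F⟩, hmin⟩ := Int.exists_least_of_bdd
    (P := fun k => C k ∈ 𝓕 ∧ G ⊆ C k ∧ C k ⊂ F)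
    ⟨kF, fun k hk => (lt_of_dyadicCube_ssubset (hkF ▸ hk.2.2)).le⟩
    ⟨kG, by rw [← hkG]; exact ⟨hG, subset_rfl, hGF⟩⟩
  refine ⟨C k₀, ⟨hk₀, hk₀F, fun H hH hsub hHF => ?_⟩, hGk₀⟩
  obtain ⟨k, rfl⟩ : ∃ k, H = C k := (h𝓕 H hH).eq_dyadicCube_floor (hsub (hxC k₀))
  exact (dyadicCube_subset_of_le (hmin k ⟨hH, hGk₀.trans hsub, hHF⟩) (hxC k₀) (hxC k)).antisymm
    hsub

theorem IsChild.eq_of_isChild (h𝓕 : ∀ F ∈ 𝓕, IsDyadicCube F) {F₁ F₂ G : Set (Fin n → ℝ)}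
    (hF₁ : F₁ ∈ 𝓕) (hF₂ : F₂ ∈ 𝓕) (h₁ : IsChild 𝓕 F₁ G) (h₂ : IsChild 𝓕 F₂ G) : F₁ = F₂ := by
  by_contra hne
  obtain ⟨x, hx⟩ := (h𝓕 G h₁.1).nonempty
  rcases (h𝓕 F₁ hF₁).ssubset_or_ssubset (h𝓕 F₂ hF₂) (h₁.2.1.subset hx) (h₂.2.1.subset hx) hne
    with h | h
  · exact h₁.2.1.ne' (h₂.2.2 F₁ hF₁ h₁.2.1.subset h)
  · exact h₂.2.1.ne' (h₁.2.2 F₂ hF₂ h₂.2.1.subset h)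

theorem IsChild.disjoint (h𝓕 : ∀ F ∈ 𝓕, IsDyadicCube F) {F G₁ G₂ : Set (Fin n → ℝ)}
    (h₁ : IsChild 𝓕 F G₁) (h₂ : IsChild 𝓕 F G₂) (hne : G₁ ≠ G₂) : Disjoint G₁ G₂ := by
  refine Set.disjoint_left.2 fun x hx₁ hx₂ => ?_
  rcases (h𝓕 G₁ h₁.1).ssubset_or_ssubset (h𝓕 G₂ h₂.1) hx₁ hx₂ hne with h | h
  · exact hne (h₁.2.2 G₂ h₂.1 h.subset h₂.2.1).symm
  · exact hne (h₂.2.2 G₁ h₁.1 h.subset h₁.2.1)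

end DyadicFamily

section Sparse

variable {n : ℕ}

def children (𝓕 : Set (Set (Fin n → ℝ))) (F : Set (Fin n → ℝ)) : Set (Set (Fin n → ℝ)) :=
  {M | IsChild 𝓕 F M}

def childPart (𝓕 : Set (Set (Fin n → ℝ))) (a : Set (Fin n → ℝ) → (Fin n → ℝ) → ℝ≥0∞)
    (F : Set (Fin n → ℝ)) : (Fin n → ℝ) → ℝ≥0∞ :=
  (⋃₀ children 𝓕 F).indicator (a F)

structure IsSparse (σ : Measure (Fin n → ℝ)) (𝓕 : Set (Set (Fin n → ℝ)))
    (E : Set (Fin n → ℝ) → Set (Fin n → ℝ)) : Prop where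
  isDyadicCube : ∀ F ∈ 𝓕, IsDyadicCube F
  subset : ∀ F ∈ 𝓕, E F ⊆ F
  measurableSet : ∀ F ∈ 𝓕, MeasurableSet (E F)
  half_measure_le : ∀ F ∈ 𝓕, σ F / 2 ≤ σ (E F)
  disjoint : ∀ F ∈ 𝓕, ∀ G ∈ 𝓕, F ≠ G → Disjoint (E F) (E G)

variable {σ : Measure (Fin n → ℝ)} {𝓕 : Set (Set (Fin n → ℝ))}
  {E : Set (Fin n → ℝ) → Set (Fin n → ℝ)} {a : Set (Fin n → ℝ) → (Fin n → ℝ) → ℝ≥0∞}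

theorem countable_of_forall_isDyadicCube (h𝓕 : ∀ F ∈ 𝓕, IsDyadicCube F) : 𝓕.Countable :=
  countable_setOf_isDyadicCube.mono h𝓕

theorem sUnion_children_subset (F : Set (Fin n → ℝ)) : ⋃₀ children 𝓕 F ⊆ F :=
  sUnion_subset fun _ hM => hM.2.1.subset

theorem measurableSet_sUnion_children (h𝓕 : ∀ F ∈ 𝓕, IsDyadicCube F) (F : Set (Fin n → ℝ)) :
    MeasurableSet (⋃₀ children 𝓕 F) :=
  .sUnion ((countable_of_forall_isDyadicCube h𝓕).mono fun _ hM => hM.1)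
    fun M hM => (h𝓕 M hM.1).measurableSet

theorem measurableSet_sdiff_sUnion_children (h𝓕 : ∀ F ∈ 𝓕, IsDyadicCube F)
    {F : Set (Fin n → ℝ)} (hF : F ∈ 𝓕) : MeasurableSet (F \ ⋃₀ children 𝓕 F) :=
  (h𝓕 F hF).measurableSet.diff (measurableSet_sUnion_children h𝓕 F)

theorem pairwise_disjoint_sdiff_sUnion_children (h𝓕 : ∀ F ∈ 𝓕, IsDyadicCube F) :
    Pairwise (Disjoint on fun F : 𝓕 => F.1 \ ⋃₀ children 𝓕 F.1) := by
  intro F G hne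
  refine Set.disjoint_left.2 fun x ⟨hxF, hxF'⟩ ⟨hxG, hxG'⟩ => ?_
  rcases (h𝓕 F F.2).ssubset_or_ssubset (h𝓕 G G.2) hxF hxG (Subtype.coe_injective.ne hne)
    with h | h
  · obtain ⟨M, hM, hFM⟩ := exists_isChild_superset h𝓕 G.2 F.2 h
    exact hxG' ⟨M, hM, hFM hxF⟩
  · obtain ⟨M, hM, hGM⟩ := exists_isChild_superset h𝓕 F.2 G.2 h
    exact hxF' ⟨M, hM, hGM hxG⟩

theorem IsSparse.pairwise_disjoint_biUnion_children (h : IsSparse σ 𝓕 E) :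
    Pairwise (Disjoint on fun G : 𝓕 => ⋃ M ∈ children 𝓕 G.1, E M) := by
  intro G₁ G₂ hne
  simp only [onFun, disjoint_iUnion_left, disjoint_iUnion_right]
  intro M₂ hM₂ M₁ hM₁
  rcases eq_or_ne M₁ M₂ with rfl | hM
  · exact absurd (Subtype.ext (hM₁.eq_of_isChild h.isDyadicCube G₁.2 G₂.2 hM₂)) hne
  · exact h.disjoint M₁ hM₁.1 M₂ hM₂.1 hM

theorem IsSparse.measurableSet_biUnion_children (h : IsSparse σ 𝓕 E) (G : Set (Fin n → ℝ)) :
    MeasurableSet (⋃ M ∈ children 𝓕 G, E M) :=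
  .biUnion ((countable_of_forall_isDyadicCube h.isDyadicCube).mono fun _ hM => hM.1)
    fun M hM => h.measurableSet M hM.1

theorem childPart_eq_of_ssubset (h𝓕 : ∀ F ∈ 𝓕, IsDyadicCube F)
    (hconst : ∀ F ∈ 𝓕, ∀ F', IsChild 𝓕 F F' → ∀ x ∈ F', ∀ y ∈ F', a F x = a F y)
    {F M : Set (Fin n → ℝ)} (hF : F ∈ 𝓕) (hM : M ∈ 𝓕) (hMF : M ⊂ F) {x y : Fin n → ℝ}
    (hx : x ∈ M) (hy : y ∈ M) : childPart 𝓕 a F x = childPart 𝓕 a F y := by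
  obtain ⟨M', hM', hMM'⟩ := exists_isChild_superset h𝓕 hF hM hMF
  rw [childPart, indicator_of_mem (mem_sUnion_of_mem (hMM' hx) hM'),
    indicator_of_mem (mem_sUnion_of_mem (hMM' hy) hM')]
  exact hconst F hF M' hM' x (hMM' hx) y (hMM' hy)

theorem measurable_childPart (h𝓕 : ∀ F ∈ 𝓕, IsDyadicCube F) {F : Set (Fin n → ℝ)}
    (haF : Measurable (a F)) :
    Measurable (childPart 𝓕 a F) :=
  haF.indicator (measurableSet_sUnion_children h𝓕 F)

theorem childPart_add_indicator_sdiff {F : Set (Fin n → ℝ)} (hsupp : ∀ x, x ∉ F → a F x = 0)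
    (x : Fin n → ℝ) :
    childPart 𝓕 a F x + (F \ ⋃₀ children 𝓕 F).indicator (a F) x = a F x := by
  rw [childPart, ← indicator_union_of_notMem_inter fun hx => hx.2.2 hx.1,
    union_sdiff_cancel (sUnion_children_subset F),
    indicator_eq_self.2 fun y hy => by_contra fun hyF => hy (hsupp y hyF)]


theorem IsSparse.lintegral_childPart_mul_le (h : IsSparse σ 𝓕 E)
    (hconst : ∀ F ∈ 𝓕, ∀ F', IsChild 𝓕 F F' → ∀ x ∈ F', ∀ y ∈ F', a F x = a F y)
    {G : Set (Fin n → ℝ)} (hG : G ∈ 𝓕) (t : Finset 𝓕) (ht : ∀ G' ∈ t, G ⊆ G'.1) (r : ℝ) :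
    ∫⁻ x, childPart 𝓕 a G x * (∑ G' ∈ t, childPart 𝓕 a G' x) ^ r ∂σ ≤
      2 * ∫⁻ x, (⋃ M ∈ children 𝓕 G, E M).indicator (a G) x *
        (∑ G' ∈ t, childPart 𝓕 a G' x) ^ r ∂σ := by
  have : Countable (children 𝓕 G) :=
    ((countable_of_forall_isDyadicCube h.isDyadicCube).mono fun _ hM => hM.1).to_subtype
  have hvanish : ∀ x ∉ ⋃ M : children 𝓕 G, M.1,
      childPart 𝓕 a G x * (∑ G' ∈ t, childPart 𝓕 a G' x) ^ r = 0 := fun x hx => by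
    rw [childPart, indicator_of_notMem (by rwa [sUnion_eq_iUnion]), zero_mul]
  -- Every cube of `t` contains the children of `G`, so the integrand is constant on them.
  have hconst' : ∀ M : children 𝓕 G, ∀ x ∈ M.1, ∀ y ∈ M.1,
      childPart 𝓕 a G x * (∑ G' ∈ t, childPart 𝓕 a G' x) ^ r =
        childPart 𝓕 a G y * (∑ G' ∈ t, childPart 𝓕 a G' y) ^ r := fun M x hx y hy => by
    have hMG : M.1 ⊂ G := M.2.2.1
    rw [childPart_eq_of_ssubset h.isDyadicCube hconst hG M.2.1 hMG hx hy,
      Finset.sum_congr rfl fun G' hG' => childPart_eq_of_ssubset h.isDyadicCube hconst G'.2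
        M.2.1 (hMG.trans_subset (ht G' hG')) hx hy]
  have hdouble := lintegral_le_mul_setLIntegral_iUnion (μ := σ) (c := 2)
    (fun M : children 𝓕 G => (h.isDyadicCube M.1 M.2.1).measurableSet)
    (fun M₁ M₂ hne => IsChild.disjoint h.isDyadicCube M₁.2 M₂.2 (Subtype.coe_injective.ne hne))
    (fun M => h.measurableSet M.1 M.2.1) (fun M => h.subset M.1 M.2.1)
    (fun M => by
      simpa [ENNReal.div_le_iff_le_mul, mul_comm] using h.half_measure_le M.1 M.2.1)
    hvanish hconst'
  refine hdouble.trans (mul_le_mul_right ?_ 2)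
  rw [iUnion_subtype, ← lintegral_indicator (h.measurableSet_biUnion_children G)]
  refine lintegral_mono fun x => ?_
  rw [indicator_mul_left]
  gcongr
  exact indicator_le_self _ _ x

theorem rpow_sum_childPart_le (h𝓕 : ∀ F ∈ 𝓕, IsDyadicCube F) [DecidableLE 𝓕] (s : Finset 𝓕)
    {p : ℝ} (hp : 1 ≤ p) (x : Fin n → ℝ) :
    (∑ G ∈ s, childPart 𝓕 a G x) ^ p ≤ ENNReal.ofReal p *
      ∑ G ∈ s, childPart 𝓕 a G x * (∑ G' ∈ s with G ≤ G', childPart 𝓕 a G' x) ^ (p - 1) := by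
  set s' := s.filter fun G : 𝓕 => childPart 𝓕 a G x ≠ 0
  -- The cubes on which `childPart` does not vanish at `x` all contain `x`, hence are nested.
  have hchain : IsChain (· ≤ ·) (s' : Set 𝓕) := by
    intro F hF G hG _
    have hx : ∀ G ∈ s', x ∈ G.1 := fun G hG =>
      sUnion_children_subset _ (mem_of_indicator_ne_zero (Finset.mem_filter.1 hG).2)
    exact (h𝓕 F F.2).subset_or_subset (h𝓕 G G.2) ⟨x, hx F hF, hx G hG⟩
  calc (∑ G ∈ s, childPart 𝓕 a G x) ^ p = (∑ G ∈ s', childPart 𝓕 a G x) ^ p := by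
        rw [Finset.sum_filter_ne_zero]
    _ ≤ ENNReal.ofReal p *
          ∑ G ∈ s', childPart 𝓕 a G x * (∑ G' ∈ s' with G ≤ G', childPart 𝓕 a G' x) ^ (p - 1) :=
        rpow_sum_le_of_isChain hchain _ hp
    _ ≤ _ := by
        gcongr ENNReal.ofReal p * ?_
        refine (Finset.sum_le_sum fun G _ => ?_).trans
          (Finset.sum_le_sum_of_subset (Finset.filter_subset _ s))
        gcongr
        exact Finset.filter_subset _ s

theorem IsSparse.tsum_lintegral_indicator_mul_le (h : IsSparse σ 𝓕 E)
    (ha : ∀ F ∈ 𝓕, Measurable (a F)) {p q : ℝ} (hpq : p.HolderConjugate q)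
    {f : (Fin n → ℝ) → ℝ≥0∞} (hf : Measurable f) :
    ∑' G : 𝓕, ∫⁻ x, (⋃ M ∈ children 𝓕 G.1, E M).indicator (a G) x * f x ∂σ ≤
      (∑' F : 𝓕, ∫⁻ x, a F x ^ p ∂σ) ^ (1 / p) * (∫⁻ x, f x ^ q ∂σ) ^ (1 / q) := by
  have : Countable 𝓕 := (countable_of_forall_isDyadicCube h.isDyadicCube).to_subtype
  have hY : ∀ G : 𝓕, Measurable ((⋃ M ∈ children 𝓕 G.1, E M).indicator (a G)) := fun G =>
    (ha G G.2).indicator (h.measurableSet_biUnion_children G)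
  calc ∑' G : 𝓕, ∫⁻ x, (⋃ M ∈ children 𝓕 G.1, E M).indicator (a G) x * f x ∂σ
      = ∫⁻ x, (∑' G : 𝓕, (⋃ M ∈ children 𝓕 G.1, E M).indicator (a G) x) * f x ∂σ := by
        simp_rw [← ENNReal.tsum_mul_right]
        exact (lintegral_tsum fun G => ((hY G).mul hf).aemeasurable).symm
    _ ≤ (∫⁻ x, (∑' G : 𝓕, (⋃ M ∈ children 𝓕 G.1, E M).indicator (a G) x) ^ p ∂σ) ^ (1 / p) *
          (∫⁻ x, f x ^ q ∂σ) ^ (1 / q) :=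
        ENNReal.lintegral_mul_le_Lp_mul_Lq σ hpq (Measurable.tsum hY).aemeasurable
          hf.aemeasurable
    _ ≤ _ := by
        refine mul_le_mul_left (rpow_le_rpow ?_ (one_div_pos.2 hpq.pos).le) _
        exact lintegral_tsum_indicator_rpow_le (S := fun G : 𝓕 => ⋃ M ∈ children 𝓕 G.1, E M)
          (fun G => h.measurableSet_biUnion_children G) h.pairwise_disjoint_biUnion_children
          (fun G => ha G G.2) hpq.pos

theorem IsSparse.lintegral_sum_childPart_rpow_le (h : IsSparse σ 𝓕 E)
    (ha : ∀ F ∈ 𝓕, Measurable (a F))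
    (hconst : ∀ F ∈ 𝓕, ∀ F', IsChild 𝓕 F F' → ∀ x ∈ F', ∀ y ∈ F', a F x = a F y)
    {p : ℝ} (hp : 1 < p) (s : Finset 𝓕) :
    (∫⁻ x, (∑ G ∈ s, childPart 𝓕 a G x) ^ p ∂σ) ^ (1 / p) ≤
      ENNReal.ofReal (2 * p) * (∑' F : 𝓕, ∫⁻ x, a F x ^ p ∂σ) ^ (1 / p) := by
  classical
  have hp0 : 0 < p := by linarith
  have hpq := Real.HolderConjugate.conjExponent hp
  set A := ∑' F : 𝓕, ∫⁻ x, a F x ^ p ∂σ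
  rcases eq_or_ne A ⊤ with hA | hA
  · rw [hA, top_rpow_of_pos (one_div_pos.2 hp0), mul_top (by simpa using hp0)]
    exact le_top
  set S := fun x => ∑ G ∈ s, childPart 𝓕 a G x
  have hmeas : ∀ G : 𝓕, Measurable (childPart 𝓕 a G) := fun G =>
    measurable_childPart h.isDyadicCube (ha G G.2)
  have hS : Measurable S := Finset.measurable_sum s fun G _ => hmeas G
  refine rpow_one_div_le_of_le_mul_rpow hpq
    (lintegral_rpow_sum_ne_top s hmeas hp.le fun G _ => ne_top_of_le_ne_top hA ?_) ?_
  · exact (lintegral_mono fun x => rpow_le_rpow (indicator_le_self _ _ x) hp0.le).trans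
      (ENNReal.le_tsum G)
  calc ∫⁻ x, S x ^ p ∂σ
      ≤ ∫⁻ x, ENNReal.ofReal p * ∑ G ∈ s, childPart 𝓕 a G x *
          (∑ G' ∈ s with G ≤ G', childPart 𝓕 a G' x) ^ (p - 1) ∂σ :=
        lintegral_mono fun x => rpow_sum_childPart_le h.isDyadicCube s hp.le x
    _ = ENNReal.ofReal p * ∑ G ∈ s, ∫⁻ x, childPart 𝓕 a G x *
          (∑ G' ∈ s with G ≤ G', childPart 𝓕 a G' x) ^ (p - 1) ∂σ := by
        rw [lintegral_const_mul _ (by fun_prop), lintegral_finsetSum _ fun G _ => by fun_prop]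
    _ ≤ ENNReal.ofReal p * ∑ G ∈ s, 2 * ∫⁻ x,
          (⋃ M ∈ children 𝓕 G.1, E M).indicator (a G) x * S x ^ (p - 1) ∂σ := by
        gcongr with G
        refine (h.lintegral_childPart_mul_le hconst G.2 _
          (fun G' hG' => (Finset.mem_filter.1 hG').2) _).trans ?_
        gcongr
        exact Finset.sum_le_sum_of_subset (Finset.filter_subset _ s)
    _ ≤ ENNReal.ofReal p * (2 * (A ^ (1 / p) * (∫⁻ x, (S x ^ (p - 1)) ^ p.conjExponent ∂σ) ^
          (1 / p.conjExponent))) := by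
        rw [← Finset.mul_sum]
        gcongr
        exact (ENNReal.sum_le_tsum s).trans (h.tsum_lintegral_indicator_mul_le ha hpq (by fun_prop))
    _ = ENNReal.ofReal (2 * p) * A ^ (1 / p) * (∫⁻ x, S x ^ p ∂σ) ^ (1 / p.conjExponent) := by
        simp_rw [← rpow_mul, hpq.sub_one_mul_conj]
        rw [ENNReal.ofReal_mul zero_le_two, ofReal_ofNat]
        ring

theorem IsSparse.lintegral_tsum_childPart_rpow_le (h : IsSparse σ 𝓕 E)
    (ha : ∀ F ∈ 𝓕, Measurable (a F))
    (hconst : ∀ F ∈ 𝓕, ∀ F', IsChild 𝓕 F F' → ∀ x ∈ F', ∀ y ∈ F', a F x = a F y)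
    {p : ℝ} (hp : 1 < p) :
    (∫⁻ x, (∑' G : 𝓕, childPart 𝓕 a G x) ^ p ∂σ) ^ (1 / p) ≤
      ENNReal.ofReal (2 * p) * (∑' F : 𝓕, ∫⁻ x, a F x ^ p ∂σ) ^ (1 / p) := by
  have : Countable 𝓕 := (countable_of_forall_isDyadicCube h.isDyadicCube).to_subtype
  have hp0 : 0 < p := by linarith
  have hfin := h.lintegral_sum_childPart_rpow_le ha hconst hp
  simp_rw [one_div, rpow_inv_le_iff hp0] at hfin ⊢
  exact lintegral_rpow_tsum_le_of_forall_finset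
    (fun G : 𝓕 => measurable_childPart h.isDyadicCube (ha G G.2)) hp0 hfin

theorem lintegral_tsum_indicator_sdiff_rpow_le (h𝓕 : ∀ F ∈ 𝓕, IsDyadicCube F)
    (ha : ∀ F ∈ 𝓕, Measurable (a F)) {p : ℝ} (hp : 0 < p) :
    ∫⁻ x, (∑' F : 𝓕, (F.1 \ ⋃₀ children 𝓕 F).indicator (a F) x) ^ p ∂σ ≤
      ∑' F : 𝓕, ∫⁻ x, a F x ^ p ∂σ := by
  have : Countable 𝓕 := (countable_of_forall_isDyadicCube h𝓕).to_subtype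
  exact lintegral_tsum_indicator_rpow_le
    (fun F : 𝓕 => measurableSet_sdiff_sUnion_children h𝓕 F.2)
    (pairwise_disjoint_sdiff_sUnion_children h𝓕) (fun F => ha F F.2) hp

theorem IsSparse.lintegral_tsum_rpow_le (h : IsSparse σ 𝓕 E) (ha : ∀ F ∈ 𝓕, Measurable (a F))
    (hsupp : ∀ F ∈ 𝓕, ∀ x, x ∉ F → a F x = 0)
    (hconst : ∀ F ∈ 𝓕, ∀ F', IsChild 𝓕 F F' → ∀ x ∈ F', ∀ y ∈ F', a F x = a F y)
    {p : ℝ} (hp : 1 ≤ p) :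
    (∫⁻ x, (∑' F : 𝓕, a F x) ^ p ∂σ) ^ (1 / p) ≤
      ENNReal.ofReal (3 * p) * (∑' F : 𝓕, ∫⁻ x, a F x ^ p ∂σ) ^ (1 / p) := by
  have : Countable 𝓕 := (countable_of_forall_isDyadicCube h.isDyadicCube).to_subtype
  have hmeas : ∀ F : 𝓕, Measurable (a F) := fun F => ha F F.2
  rcases hp.eq_or_lt with rfl | hp1
  · simp only [rpow_one, div_one, lintegral_tsum fun F => (hmeas F).aemeasurable]
    exact le_mul_of_one_le_left zero_le (by norm_num)
  set A := ∑' F : 𝓕, ∫⁻ x, a F x ^ p ∂σ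
  have hsplit : ∀ x, ∑' F : 𝓕, a F x =
      ∑' F : 𝓕, childPart 𝓕 a F x + ∑' F : 𝓕, (F.1 \ ⋃₀ children 𝓕 F).indicator (a F) x :=
    fun x => by
      rw [← ENNReal.tsum_add]
      exact tsum_congr fun F => (childPart_add_indicator_sdiff (hsupp F F.2) x).symm
  calc (∫⁻ x, (∑' F : 𝓕, a F x) ^ p ∂σ) ^ (1 / p)
      ≤ (∫⁻ x, (∑' F : 𝓕, childPart 𝓕 a F x) ^ p ∂σ) ^ (1 / p)
          + (∫⁻ x, (∑' F : 𝓕, (F.1 \ ⋃₀ children 𝓕 F).indicator (a F) x) ^ p ∂σ) ^ (1 / p) := by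
        have hg : ∀ F : 𝓕, Measurable ((F.1 \ ⋃₀ children 𝓕 F).indicator (a F)) := fun F =>
          (hmeas F).indicator (measurableSet_sdiff_sUnion_children h.isDyadicCube F.2)
        simp_rw [hsplit]
        exact ENNReal.lintegral_Lp_add_le
          (Measurable.tsum fun F => measurable_childPart h.isDyadicCube (hmeas F)).aemeasurable
          (Measurable.tsum hg).aemeasurable hp
    _ ≤ ENNReal.ofReal (2 * p) * A ^ (1 / p) + A ^ (1 / p) := by
        gcongr
        · exact h.lintegral_tsum_childPart_rpow_le ha hconst hp1
        · exact lintegral_tsum_indicator_sdiff_rpow_le h.isDyadicCube ha (by linarith)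
    _ ≤ ENNReal.ofReal (3 * p) * A ^ (1 / p) := by
        rw [← add_one_mul]
        gcongr
        rw [← ofReal_one, ← ofReal_add (by positivity) zero_le_one]
        exact ofReal_le_ofReal (by linarith)

end Sparse

theorem sparse_lp_sum_general
    {n : ℕ} (σ : Measure (Fin n → ℝ))
    (p : ℝ) (hp : 1 ≤ p)
    (𝓕 : Set (Set (Fin n → ℝ))) (h𝓕 : ∀ F ∈ 𝓕, IsDyadicCube F)
    (E : Set (Fin n → ℝ) → Set (Fin n → ℝ))
    (hE : ∀ F ∈ 𝓕, E F ⊆ F ∧ MeasurableSet (E F) ∧ σ F / 2 ≤ σ (E F))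
    (hdisj : ∀ F ∈ 𝓕, ∀ G ∈ 𝓕, F ≠ G → Disjoint (E F) (E G))
    (a : Set (Fin n → ℝ) → (Fin n → ℝ) → ℝ≥0∞)
    (ha : ∀ F ∈ 𝓕, Measurable (a F))
    (hsupp : ∀ F ∈ 𝓕, ∀ x, x ∉ F → a F x = 0)
    (hconst : ∀ F ∈ 𝓕, ∀ F', IsChild 𝓕 F F' → ∀ x ∈ F', ∀ y ∈ F', a F x = a F y) :
    (∑' F : 𝓕, ∫⁻ x, a F.1 x ^ p ∂σ) ^ (1 / p)
        ≤ (∫⁻ x, (∑' F : 𝓕, a F.1 x) ^ p ∂σ) ^ (1 / p)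
      ∧ (∫⁻ x, (∑' F : 𝓕, a F.1 x) ^ p ∂σ) ^ (1 / p)
        ≤ ENNReal.ofReal (3 * p) * (∑' F : 𝓕, ∫⁻ x, a F.1 x ^ p ∂σ) ^ (1 / p) := by
  have h : IsSparse σ 𝓕 E := ⟨h𝓕, fun F hF => (hE F hF).1, fun F hF => (hE F hF).2.1,
    fun F hF => (hE F hF).2.2, hdisj⟩
  have : Countable 𝓕 := (countable_of_forall_isDyadicCube h𝓕).to_subtype
  exact ⟨rpow_le_rpow (tsum_lintegral_rpow_le_lintegral_rpow_tsum (fun F : 𝓕 => ha F F.2) hp)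
    (one_div_pos.2 (by linarith)).le, h.lintegral_tsum_rpow_le ha hsupp hconst hp⟩

theorem sparse_lp_sum
    {n : ℕ} (σ : Measure (Fin n → ℝ)) [IsLocallyFiniteMeasure σ]
    (p : ℝ) (hp : 1 ≤ p)
    (𝓕 : Set (Set (Fin n → ℝ))) (h𝓕 : ∀ F ∈ 𝓕, IsDyadicCube F)
    (E : Set (Fin n → ℝ) → Set (Fin n → ℝ))
    (hE : ∀ F ∈ 𝓕, E F ⊆ F ∧ MeasurableSet (E F) ∧ σ F / 2 ≤ σ (E F))
    (hdisj : ∀ F ∈ 𝓕, ∀ G ∈ 𝓕, F ≠ G → Disjoint (E F) (E G))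
    (a : Set (Fin n → ℝ) → (Fin n → ℝ) → ℝ≥0∞)
    (ha : ∀ F ∈ 𝓕, Measurable (a F))
    (hsupp : ∀ F ∈ 𝓕, ∀ x, x ∉ F → a F x = 0)
    (hconst : ∀ F ∈ 𝓕, ∀ F', IsChild 𝓕 F F' → ∀ x ∈ F', ∀ y ∈ F', a F x = a F y) :
    (∑' F : 𝓕, ∫⁻ x, a F.1 x ^ p ∂σ) ^ (1 / p)
        ≤ (∫⁻ x, (∑' F : 𝓕, a F.1 x) ^ p ∂σ) ^ (1 / p)
      ∧ (∫⁻ x, (∑' F : 𝓕, a F.1 x) ^ p ∂σ) ^ (1 / p)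
        ≤ ENNReal.ofReal (3 * p) * (∑' F : 𝓕, ∫⁻ x, a F.1 x ^ p ∂σ) ^ (1 / p) :=
  sparse_lp_sum_general σ p hp 𝓕 h𝓕 E hE hdisj a ha hsupp hconst
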